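/- Let Q be a finite acyclic quiver and S, T subquivers of Q, where S has a unique source s₀. Then every connected component of the fiber product P_{S,s₀} ×_Q E_T, regarded as a quiver over Q via the restricted structure map, is isomorphic over Q to a path quiver P_{W,j}, where j is a vertex of S ∩ T and W is the successor closure of j in S ∩ T, i.e. the subquiver of S ∩ T whose vertices are the terminal vertices of paths in S ∩ T starting at j, together with all arrows of S ∩ T between such vertices. -/

import Mathlib

/-! ## Bundled quivers and quivers over a fixed quiver -/

/-- A (bundled) quiver: a set of vertices, a set of arrows, and source/target maps. -/
structure BQuiv : Type 1 where
  V : Type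
  E : Type
  s : E → V
  t : E → V

namespace BQuiv

/-- A morphism of quivers (a "coloring"). -/
@[ext]
structure Hom (A B : BQuiv) where
  onV : A.V → B.V
  onE : A.E → B.E
  hs : ∀ e : A.E, B.s (onE e) = onV (A.s e)
  ht : ∀ e : A.E, B.t (onE e) = onV (A.t e)

/-- Composition of morphisms of quivers. -/
def Hom.comp {A B C : BQuiv} (f : Hom A B) (g : Hom B C) : Hom A C where
  onV v := g.onV (f.onV v)
  onE e := g.onE (f.onE e)
  hs e := by rw [g.hs, f.hs]
  ht e := by rw [g.ht, f.ht]

/-- `Q.IsPathFrom a b es` : the list of edges `es` forms a path from `a` to `b` in `Q`. -/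
def IsPathFrom (Q : BQuiv) : Q.V → Q.V → List Q.E → Prop
  | a, b, [] => a = b
  | a, b, e :: es => Q.s e = a ∧ Q.IsPathFrom (Q.t e) b es

theorem IsPathFrom.snoc {Q : BQuiv} {a b : Q.V} {es : List Q.E}
    (h : Q.IsPathFrom a b es) {e : Q.E} (he : Q.s e = b) :
    Q.IsPathFrom a (Q.t e) (es ++ [e]) := by
  induction es generalizing a with
  | nil =>
      simp only [IsPathFrom] at h
      subst h
      exact ⟨he, rfl⟩
  | cons f fs ih =>
      obtain ⟨h1, h2⟩ := h
      exact ⟨h1, ih h2⟩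

theorem IsPathFrom.append {Q : BQuiv} {a b c : Q.V} {es fs : List Q.E}
    (h : Q.IsPathFrom a b es) (h' : Q.IsPathFrom b c fs) :
    Q.IsPathFrom a c (es ++ fs) := by
  induction es generalizing a with
  | nil =>
      simp only [IsPathFrom] at h
      subst h
      exact h'
  | cons f gs ih =>
      obtain ⟨h1, h2⟩ := h
      exact ⟨h1, ih h2⟩

/-- `Q` is acyclic if every path from a vertex to itself is trivial. -/
def IsAcyclic (Q : BQuiv) : Prop :=
  ∀ (v : Q.V) (es : List Q.E), Q.IsPathFrom v v es → es = []

/-! ## Subquivers -/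

/-- A subquiver of `Q`: a subset of vertices and a subset of arrows with endpoints in it. -/
structure Sub (Q : BQuiv) where
  verts : Set Q.V
  edges : Set Q.E
  src_mem : ∀ e ∈ edges, Q.s e ∈ verts
  tgt_mem : ∀ e ∈ edges, Q.t e ∈ verts

/-- The quiver underlying a subquiver. -/
def Sub.toBQuiv {Q : BQuiv} (T : Sub Q) : BQuiv where
  V := T.verts
  E := T.edges
  s e := ⟨Q.s e.1, T.src_mem e.1 e.2⟩
  t e := ⟨Q.t e.1, T.tgt_mem e.1 e.2⟩

/-- The inclusion of a subquiver; `E_T` is `(T.toBQuiv, T.incl)` as a quiver over `Q`. -/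
def Sub.incl {Q : BQuiv} (T : Sub Q) : Hom T.toBQuiv Q where
  onV := Subtype.val
  onE := Subtype.val
  hs _ := rfl
  ht _ := rfl

/-- `T.IsPathIn a b es` : `es` is a path from `a` to `b` lying entirely in the
subquiver `T`. -/
def Sub.IsPathIn {Q : BQuiv} (T : Sub Q) (a b : Q.V) (es : List Q.E) : Prop :=
  a ∈ T.verts ∧ Q.IsPathFrom a b es ∧ ∀ e ∈ es, e ∈ T.edges

/-- Intersection of subquivers. -/
def Sub.inter {Q : BQuiv} (S T : Sub Q) : Sub Q where
  verts := S.verts ∩ T.verts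
  edges := S.edges ∩ T.edges
  src_mem e he := ⟨S.src_mem e he.1, T.src_mem e he.2⟩
  tgt_mem e he := ⟨S.tgt_mem e he.1, T.tgt_mem e he.2⟩

/-- The full subquiver (all of `Q`). -/
def fullSub (Q : BQuiv) : Sub Q where
  verts := Set.univ
  edges := Set.univ
  src_mem _ _ := trivial
  tgt_mem _ _ := trivial

/-- `S ⊆ T` for subquivers. -/
def Sub.le {Q : BQuiv} (S T : Sub Q) : Prop :=
  S.verts ⊆ T.verts ∧ S.edges ⊆ T.edges

/-- The successor closure of a vertex `j` in a subquiver `U`: the vertices of `U`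
reachable from `j` by a path in `U`, together with all arrows of `U` between them. -/
def succClosure {Q : BQuiv} (U : Sub Q) (j : Q.V) : Sub Q where
  verts := {v | ∃ es, U.IsPathIn j v es}
  edges := {e | e ∈ U.edges ∧ (∃ es, U.IsPathIn j (Q.s e) es) ∧ ∃ es, U.IsPathIn j (Q.t e) es}
  src_mem _ he := he.2.1
  tgt_mem _ he := he.2.2

/-- `s₀` is the unique source of the subquiver `S`. -/
def Sub.IsUniqueSource {Q : BQuiv} (S : Sub Q) (s₀ : Q.V) : Prop :=
  s₀ ∈ S.verts ∧ (∀ e ∈ S.edges, Q.t e ≠ s₀) ∧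
    ∀ v ∈ S.verts, (∀ e ∈ S.edges, Q.t e ≠ v) → v = s₀

/-- `u₀` is the unique sink of the subquiver `S`. -/
def Sub.IsUniqueSink {Q : BQuiv} (S : Sub Q) (u₀ : Q.V) : Prop :=
  u₀ ∈ S.verts ∧ (∀ e ∈ S.edges, Q.s e ≠ u₀) ∧
    ∀ v ∈ S.verts, (∀ e ∈ S.edges, Q.s e ≠ v) → v = u₀

/-! ## Path and copath quivers -/

/-- The path quiver `P_{T,t}`: vertices are the paths in `T` starting at `t` (recorded as
a pair (endpoint, list of edges)); there is one arrow `p ⟶ p·α` for each path-vertex `p`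
and each arrow `α` of `T` starting at the endpoint of `p`. -/
def PathQ {Q : BQuiv} (T : Sub Q) (t : Q.V) : BQuiv where
  V := {x : Q.V × List Q.E // T.IsPathIn t x.1 x.2}
  E := {y : (Q.V × List Q.E) × Q.E //
        T.IsPathIn t y.1.1 y.1.2 ∧ y.2 ∈ T.edges ∧ Q.s y.2 = y.1.1}
  s y := ⟨y.1.1, y.2.1⟩
  t y := ⟨(Q.t y.1.2, y.1.1.2 ++ [y.1.2]),
    ⟨y.2.1.1, (y.2.1.2.1).snoc y.2.2.2, by
      intro e he
      rcases List.mem_append.1 he with h | h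
      · exact y.2.1.2.2 e h
      · rw [List.mem_singleton.1 h]; exact y.2.2.1⟩⟩

/-- The structure map of the path quiver `P_{T,t}` as a quiver over `Q`: a path is sent
to its terminal vertex, and the arrow `(p, α)` to `α`. -/
def pathPi {Q : BQuiv} (T : Sub Q) (t : Q.V) : Hom (PathQ T t) Q where
  onV p := p.1.1
  onE y := y.1.2
  hs y := y.2.2.2
  ht _ := rfl

/-- The copath quiver `I_{T,u}`: vertices are the paths in `T` ending at `u` (recorded as
a pair (starting vertex, list of edges)); there is one arrow `α·q ⟶ q` for each vertex `q`
and each arrow `α` of `T` ending at the starting vertex of `q`. -/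
def CoPathQ {Q : BQuiv} (T : Sub Q) (u : Q.V) : BQuiv where
  V := {x : Q.V × List Q.E // T.IsPathIn x.1 u x.2}
  E := {y : Q.E × (Q.V × List Q.E) //
        T.IsPathIn y.2.1 u y.2.2 ∧ y.1 ∈ T.edges ∧ Q.t y.1 = y.2.1}
  s y := ⟨(Q.s y.1.1, y.1.1 :: y.1.2.2),
    ⟨T.src_mem _ y.2.2.1, ⟨rfl, by rw [y.2.2.2]; exact y.2.1.2.1⟩, by
      intro e he
      rcases List.mem_cons.1 he with h | h
      · rw [h]; exact y.2.2.1
      · exact y.2.1.2.2 e h⟩⟩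
  t y := ⟨y.1.2, y.2.1⟩

/-- The structure map of the copath quiver `I_{T,u}` as a quiver over `Q`: a path is sent
to its starting vertex, and the arrow `(α, q)` to `α`. -/
def coPathPi {Q : BQuiv} (T : Sub Q) (u : Q.V) : Hom (CoPathQ T u) Q where
  onV p := p.1.1
  onE y := y.1.1
  hs _ := rfl
  ht y := y.2.2.2

/-! ## Fiber products -/

/-- The fiber product of two quivers over `Q`. -/
def Fib {Q Q' Q'' : BQuiv} (f' : Hom Q' Q) (f'' : Hom Q'' Q) : BQuiv where
  V := {p : Q'.V × Q''.V // f'.onV p.1 = f''.onV p.2}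
  E := {e : Q'.E × Q''.E // f'.onE e.1 = f''.onE e.2}
  s e := ⟨(Q'.s e.1.1, Q''.s e.1.2), by rw [← f'.hs, ← f''.hs, e.2]⟩
  t e := ⟨(Q'.t e.1.1, Q''.t e.1.2), by rw [← f'.ht, ← f''.ht, e.2]⟩

/-- The structure map of the fiber product as a quiver over `Q`. -/
def fibHom {Q Q' Q'' : BQuiv} (f' : Hom Q' Q) (f'' : Hom Q'' Q) : Hom (Fib f' f'') Q where
  onV p := f'.onV p.1.1
  onE e := f'.onE e.1.1
  hs e := f'.hs e.1.1
  ht e := f'.ht e.1.1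

/-! ## Connected components -/

/-- Adjacency in the underlying undirected graph. -/
def Adj (X : BQuiv) (v w : X.V) : Prop :=
  ∃ e : X.E, (X.s e = v ∧ X.t e = w) ∨ (X.s e = w ∧ X.t e = v)

/-- Connectivity in the underlying undirected graph. -/
def Conn (X : BQuiv) : X.V → X.V → Prop :=
  Relation.ReflTransGen (Adj X)

/-- The connected component of the vertex `v₀` in `X`, as a quiver. -/
def Component (X : BQuiv) (v₀ : X.V) : BQuiv where
  V := {v : X.V // Conn X v₀ v}
  E := {e : X.E // Conn X v₀ (X.s e)}
  s e := ⟨X.s e.1, e.2⟩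
  t e := ⟨X.t e.1, e.2.tail ⟨e.1, Or.inl ⟨rfl, rfl⟩⟩⟩

/-- The inclusion of a connected component. -/
def Component.incl (X : BQuiv) (v₀ : X.V) : Hom (Component X v₀) X where
  onV := Subtype.val
  onE := Subtype.val
  hs _ := rfl
  ht _ := rfl

/-- A connected component of a quiver over `Q`, regarded as a quiver over `Q` via the
restricted structure map. -/
def componentHom {X Q : BQuiv} (h : Hom X Q) (v₀ : X.V) : Hom (Component X v₀) Q :=
  (Component.incl X v₀).comp h

/-! ## Isomorphisms over `Q` and wrappings -/

/-- An isomorphism of quivers over `Q`: a morphism of quivers commuting with the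
structure maps which is bijective on vertices and on arrows. -/
structure OverIso {A B Q : BQuiv} (f : Hom A Q) (g : Hom B Q) where
  hom : Hom A B
  comm : hom.comp g = f
  bijV : Function.Bijective hom.onV
  bijE : Function.Bijective hom.onE

/-- A morphism of quivers is a wrapping if it is injective on parallel arrows. -/
def IsWrapping {A B : BQuiv} (f : Hom A B) : Prop :=
  ∀ e₁ e₂ : A.E, A.s e₁ = A.s e₂ → A.t e₁ = A.t e₂ → f.onE e₁ = f.onE e₂ → e₁ = e₂

/-! ## Linear quivers tracing a path -/

/-- The linear quiver with vertices `0, 1, …, n` and one arrow `k-1 ⟶ k` for `1 ≤ k ≤ n`. -/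
def LinQ (n : ℕ) : BQuiv where
  V := Fin (n + 1)
  E := Fin n
  s := Fin.castSucc
  t := Fin.succ

/-- The vertex reached after `k` steps along a list of edges starting at `a`. -/
def vertAt (Q : BQuiv) : Q.V → List Q.E → ℕ → Q.V
  | a, _, 0 => a
  | a, [], _ + 1 => a
  | _, e :: es, k + 1 => vertAt Q (Q.t e) es k

theorem vertAt_s {Q : BQuiv} {a b : Q.V} {es : List Q.E} (h : Q.IsPathFrom a b es)
    (k : Fin es.length) : Q.s (es.get k) = vertAt Q a es k.1 := by
  induction es generalizing a with
  | nil => exact absurd k.2 (by simp)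
  | cons e es ih =>
      obtain ⟨h1, h2⟩ := h
      rcases k with ⟨k, hk⟩
      cases k with
      | zero => exact h1
      | succ k => exact ih h2 ⟨k, Nat.lt_of_succ_lt_succ hk⟩

theorem vertAt_t {Q : BQuiv} {a b : Q.V} {es : List Q.E} (h : Q.IsPathFrom a b es)
    (k : Fin es.length) : Q.t (es.get k) = vertAt Q a es (k.1 + 1) := by
  induction es generalizing a with
  | nil => exact absurd k.2 (by simp)
  | cons e es ih =>
      obtain ⟨h1, h2⟩ := h
      rcases k with ⟨k, hk⟩
      cases k with
      | zero =>
          cases es with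
          | nil => rfl
          | cons f fs => exact (vertAt_s h2 ⟨0, by simp⟩) ▸ (h2.1).symm ▸ rfl
      | succ k => exact ih h2 ⟨k, Nat.lt_of_succ_lt_succ hk⟩

/-- The linear quiver of length `es.length` tracing the path `es` from `a` to `b`,
as a quiver over `Q`. -/
def traceHom (Q : BQuiv) (a b : Q.V) (es : List Q.E) (h : Q.IsPathFrom a b es) :
    Hom (LinQ es.length) Q where
  onV k := vertAt Q a es k.1
  onE k := es.get k
  hs k := vertAt_s h k
  ht k := vertAt_t h k

end BQuiv

open BQuiv

/-! Write the path of a vertex of `P_{S,s₀} ×_Q E_T` as `c ++ fs`, where `fs` is the longest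
final segment with all arrows in `T`, and let `j` be the endpoint of `c`. Prefixing paths by `c`
embeds `P_{W,j}` into the fiber product over `Q`, and every arrow of the fiber product leaving a
vertex of the image lies in the image. Going backwards along an arrow could only leave the image
by deleting the last arrow of `c`, which is not in `T`; so the image is closed under adjacency,
and being connected (every path is joined to the trivial path at `j`) it is a whole component. -/

theorem List.exists_maximal_suffix_forall {α : Type*} (p : α → Prop) (l : List α) :
    ∃ c fs, l = c ++ fs ∧ (∀ e ∈ fs, p e) ∧ ∀ m a, c = m ++ [a] → ¬ p a := by
  induction l using List.reverseRecOn with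
  | nil => exact ⟨[], [], rfl, by simp, fun m a h => by simp at h⟩
  | append_singleton l a ih =>
      by_cases ha : p a
      · obtain ⟨c, fs, rfl, hfs, hc⟩ := ih
        refine ⟨c, fs ++ [a], List.append_assoc .., ?_, hc⟩
        simpa [or_imp, forall_and] using And.intro hfs ha
      · refine ⟨l ++ [a], [], (List.append_nil _).symm, by simp, fun m b h => ?_⟩
        rwa [(List.append_inj' h rfl).2 |> List.singleton_inj.1 |>.symm]

namespace BQuiv

variable {Q : BQuiv}

theorem IsPathFrom.exists_of_append {a b : Q.V} {es fs : List Q.E}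
    (h : Q.IsPathFrom a b (es ++ fs)) : ∃ m, Q.IsPathFrom a m es ∧ Q.IsPathFrom m b fs := by
  induction es generalizing a with
  | nil => exact ⟨a, rfl, h⟩
  | cons e es ih =>
      obtain ⟨m, hes, hfs⟩ := ih h.2
      exact ⟨m, ⟨h.1, hes⟩, hfs⟩

theorem IsPathFrom.of_append_singleton {a b : Q.V} {es : List Q.E} {e : Q.E}
    (h : Q.IsPathFrom a b (es ++ [e])) : Q.IsPathFrom a (Q.s e) es ∧ Q.t e = b := by
  obtain ⟨m, hes, he, hb⟩ := h.exists_of_append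
  exact ⟨he ▸ hes, hb⟩

namespace Sub

variable {U U' : Sub Q} {a b : Q.V} {es : List Q.E}

theorem IsPathIn.nil (ha : a ∈ U.verts) : U.IsPathIn a a [] :=
  ⟨ha, rfl, by simp⟩

theorem IsPathIn.end_mem (h : U.IsPathIn a b es) : b ∈ U.verts := by
  obtain ⟨ha, hp, hes⟩ := h
  induction es generalizing a with
  | nil => exact hp ▸ ha
  | cons e es ih =>
      exact ih (U.tgt_mem e (hes e (by simp))) hp.2 fun f hf => hes f (by simp [hf])

theorem isPathIn_of_end_mem (hb : b ∈ U.verts) (hp : Q.IsPathFrom a b es)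
    (hes : ∀ e ∈ es, e ∈ U.edges) : U.IsPathIn a b es := by
  refine ⟨?_, hp, hes⟩
  cases es with
  | nil => exact hp ▸ hb
  | cons e es => exact hp.1 ▸ U.src_mem e (hes e (by simp))

theorem IsPathIn.append {c : Q.V} {fs : List Q.E} (h : U.IsPathIn a b es)
    (h' : U.IsPathIn b c fs) : U.IsPathIn a c (es ++ fs) :=
  ⟨h.1, h.2.1.append h'.2.1, by simpa [or_imp, forall_and] using And.intro h.2.2 h'.2.2⟩

theorem IsPathIn.snoc {e : Q.E} (h : U.IsPathIn a b es) (he : e ∈ U.edges) (hs : Q.s e = b) :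
    U.IsPathIn a (Q.t e) (es ++ [e]) :=
  h.append ⟨hs ▸ U.src_mem e he, ⟨hs, rfl⟩, by simpa using he⟩

theorem IsPathIn.of_append_singleton {e : Q.E} (h : U.IsPathIn a b (es ++ [e])) :
    U.IsPathIn a (Q.s e) es ∧ e ∈ U.edges ∧ Q.t e = b :=
  ⟨⟨h.1, h.2.1.of_append_singleton.1, fun f hf => h.2.2 f (by simp [hf])⟩,
    h.2.2 e (by simp), h.2.1.of_append_singleton.2⟩

theorem IsPathIn.mono (hle : U.le U') (h : U.IsPathIn a b es) : U'.IsPathIn a b es :=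
  ⟨hle.1 h.1, h.2.1, fun e he => hle.2 (h.2.2 e he)⟩

theorem le.trans {U'' : Sub Q} (h : U.le U') (h' : U'.le U'') : U.le U'' :=
  ⟨h.1.trans h'.1, h.2.trans h'.2⟩

theorem inter_le_left : (U.inter U').le U :=
  ⟨Set.inter_subset_left, Set.inter_subset_left⟩

end Sub

section SuccClosure

variable {U : Sub Q} {j v : Q.V} {es : List Q.E}

theorem succClosure_le : (succClosure U j).le U :=
  ⟨fun _ ⟨_, h⟩ => h.end_mem, fun _ he => he.1⟩

theorem mem_succClosure_edges {e : Q.E} (he : e ∈ U.edges)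
    (hs : Q.s e ∈ (succClosure U j).verts) : e ∈ (succClosure U j).edges := by
  obtain ⟨es, hes⟩ := hs
  exact ⟨he, ⟨es, hes⟩, ⟨es ++ [e], hes.snoc he rfl⟩⟩

theorem Sub.IsPathIn.succClosure (h : U.IsPathIn j v es) : (succClosure U j).IsPathIn j v es := by
  induction es using List.reverseRecOn generalizing v with
  | nil => exact h.2.1 ▸ Sub.IsPathIn.nil ⟨[], Sub.IsPathIn.nil h.1⟩
  | append_singleton es e ih =>
      obtain ⟨hes, he, rfl⟩ := h.of_append_singleton
      exact (ih hes).snoc (mem_succClosure_edges he ⟨es, hes⟩) rfl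

end SuccClosure

section Connectivity

variable {A X : BQuiv} {a b : X.V}

theorem Adj.symm (h : Adj X a b) : Adj X b a :=
  let ⟨e, he⟩ := h; ⟨e, he.symm⟩

theorem Conn.symm (h : Conn X a b) : Conn X b a := by
  induction h with
  | refl => exact .refl
  | tail _ hab ih => exact .head hab.symm ih

theorem Hom.conn_map (φ : Hom A X) {a b : A.V} (h : Conn A a b) :
    Conn X (φ.onV a) (φ.onV b) := by
  refine Relation.ReflTransGen.lift φ.onV (fun a b ⟨e, he⟩ => ⟨φ.onE e, ?_⟩) _ _ h
  rw [φ.hs, φ.ht]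
  rcases he with ⟨rfl, rfl⟩ | ⟨rfl, rfl⟩
  exacts [.inl ⟨rfl, rfl⟩, .inr ⟨rfl, rfl⟩]

end Connectivity

def PathQ.root {U : Sub Q} {t : Q.V} (ht : t ∈ U.verts) : (PathQ U t).V :=
  ⟨(t, []), Sub.IsPathIn.nil ht⟩

theorem PathQ.conn_root {U : Sub Q} {t : Q.V} (p : (PathQ U t).V) :
    Conn (PathQ U t) (PathQ.root p.2.1) p := by
  obtain ⟨⟨v, es⟩, h⟩ := p
  induction es using List.reverseRecOn generalizing v with
  | nil =>
      obtain rfl : t = v := h.2.1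
      exact .refl
  | append_singleton es e ih =>
      obtain ⟨hes, he, rfl⟩ := h.of_append_singleton
      exact (ih _ hes).tail ⟨⟨((Q.s e, es), e), hes, he, rfl⟩, .inl ⟨rfl, rfl⟩⟩

theorem nonempty_overIso_component {A X Q : BQuiv} (h : Hom X Q) (v₀ : X.V) (φ : Hom A X)
    (hV : Function.Injective φ.onV) (hE : Function.Injective φ.onE)
    (hrange : ∀ v, Conn X v₀ v ↔ v ∈ Set.range φ.onV)
    (hlift : ∀ e, X.s e ∈ Set.range φ.onV → e ∈ Set.range φ.onE) :
    Nonempty (OverIso (componentHom h v₀) (φ.comp h)) := by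
  have hrangeE : ∀ e, Conn X v₀ (X.s e) ↔ e ∈ Set.range φ.onE := fun e =>
    ⟨fun he => hlift e ((hrange _).1 he),
      fun ⟨a, ha⟩ => (hrange _).2 ⟨A.s a, by rw [← ha, φ.hs]⟩⟩
  let eV := (Equiv.subtypeEquivRight hrange).trans (Equiv.ofInjective φ.onV hV).symm
  let eE := (Equiv.subtypeEquivRight hrangeE).trans (Equiv.ofInjective φ.onE hE).symm
  have hφV : ∀ v : (Component X v₀).V, φ.onV (eV v) = v.1 :=
    fun _ => Equiv.apply_ofInjective_symm hV _
  have hφE : ∀ e : (Component X v₀).E, φ.onE (eE e) = e.1 :=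
    fun _ => Equiv.apply_ofInjective_symm hE _
  refine ⟨⟨⟨eV, eE, fun e => hV ?_, fun e => hV ?_⟩, ?_, eV.bijective, eE.bijective⟩⟩
  · rw [← φ.hs, hφE, hφV]; rfl
  · rw [← φ.ht, hφE, hφV]; rfl
  · ext v
    · exact congrArg h.onV (hφV v)
    · exact congrArg h.onE (hφE v)

section FiberProduct

variable {S T : Sub Q} {s₀ j : Q.V} {c : List Q.E}

theorem fib_vert_ext {q q' : (Fib (pathPi S s₀) T.incl).V} (h : q.1.1.1 = q'.1.1.1) :
    q = q' := by
  obtain ⟨⟨⟨x, hx⟩, ⟨w, hw⟩⟩, hxw⟩ := q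
  obtain ⟨⟨⟨x', hx'⟩, ⟨w', hw'⟩⟩, hxw'⟩ := q'
  obtain rfl : x = x' := h
  obtain rfl : w = w' := hxw.symm.trans hxw'
  rfl

theorem fib_edge_ext {e e' : (Fib (pathPi S s₀) T.incl).E} (h : e.1.1.1 = e'.1.1.1) :
    e = e' := by
  obtain ⟨⟨⟨x, hx⟩, ⟨α, hα⟩⟩, hxα⟩ := e
  obtain ⟨⟨⟨x', hx'⟩, ⟨α', hα'⟩⟩, hxα'⟩ := e'
  obtain rfl : x = x' := h
  obtain rfl : α = α' := hxα.symm.trans hxα'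
  rfl

def prefixHom (T : Sub Q) (hc : S.IsPathIn s₀ j c) :
    Hom (PathQ (succClosure (S.inter T) j) j) (Fib (pathPi S s₀) T.incl) where
  onV p := ⟨(⟨(p.1.1, c ++ p.1.2),
    hc.append (p.2.mono (succClosure_le.trans Sub.inter_le_left))⟩,
    ⟨p.1.1, (succClosure_le.1 p.2.end_mem).2⟩), rfl⟩
  onE y := ⟨(⟨((y.1.1.1, c ++ y.1.1.2), y.1.2),
    hc.append (y.2.1.mono (succClosure_le.trans Sub.inter_le_left)),
    (succClosure_le.2 y.2.2.1).1, y.2.2.2⟩, ⟨y.1.2, (succClosure_le.2 y.2.2.1).2⟩), rfl⟩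
  hs _ := fib_vert_ext rfl
  ht _ := fib_vert_ext (by simp [PathQ, Fib])

variable (hc : S.IsPathIn s₀ j c)

theorem prefixHom_onV_injective : Function.Injective (prefixHom T hc).onV := fun p p' h => by
  have h' := congrArg (fun q => q.1.1.1) h
  simp only [prefixHom, Prod.mk.injEq, List.append_cancel_left_eq] at h'
  exact Subtype.ext (Prod.ext h'.1 h'.2)

theorem prefixHom_onE_injective : Function.Injective (prefixHom T hc).onE := fun y y' h => by
  have h' := congrArg (fun e => e.1.1.1) h
  simp only [prefixHom, Prod.mk.injEq, List.append_cancel_left_eq] at h'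
  exact Subtype.ext (Prod.ext (Prod.ext h'.1.1 h'.1.2) h'.2)

theorem mem_range_prefixHom_onV {q : (Fib (pathPi S s₀) T.incl).V} :
    q ∈ Set.range (prefixHom T hc).onV ↔
      ∃ es, q.1.1.1.2 = c ++ es ∧ (S.inter T).IsPathIn j q.1.1.1.1 es := by
  constructor
  · rintro ⟨p, rfl⟩
    exact ⟨p.1.2, rfl, p.2.mono succClosure_le⟩
  · rintro ⟨es, hq, hes⟩
    exact ⟨⟨(q.1.1.1.1, es), hes.succClosure⟩, fib_vert_ext (Prod.ext rfl hq.symm)⟩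

theorem mem_range_prefixHom_onE {e : (Fib (pathPi S s₀) T.incl).E}
    (hs : (Fib (pathPi S s₀) T.incl).s e ∈ Set.range (prefixHom T hc).onV) :
    e ∈ Set.range (prefixHom T hc).onE := by
  obtain ⟨⟨⟨⟨⟨w, m⟩, α⟩, hm, hαS, hsα⟩, ⟨β, hβ⟩⟩, hαβ⟩ := e
  obtain rfl : α = β := hαβ
  obtain ⟨es, rfl, hes⟩ := (mem_range_prefixHom_onV hc).1 hs
  have hαW : α ∈ (succClosure (S.inter T) j).edges :=
    mem_succClosure_edges ⟨hαS, hβ⟩ ⟨es, hsα ▸ hes⟩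
  exact ⟨⟨((w, es), α), hes.succClosure, hαW, hsα⟩, fib_edge_ext rfl⟩

theorem source_mem_range_prefixHom {e : (Fib (pathPi S s₀) T.incl).E}
    (hlast : ∀ m α, c = m ++ [α] → α ∉ T.edges)
    (ht : (Fib (pathPi S s₀) T.incl).t e ∈ Set.range (prefixHom T hc).onV) :
    (Fib (pathPi S s₀) T.incl).s e ∈ Set.range (prefixHom T hc).onV := by
  obtain ⟨⟨⟨⟨⟨w, m⟩, α⟩, hm, hαS, hsα⟩, ⟨β, hβ⟩⟩, hαβ⟩ := e
  obtain rfl : α = β := hαβ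
  obtain ⟨es, hmα, hes⟩ := (mem_range_prefixHom_onV hc).1 ht
  change m ++ [α] = c ++ es at hmα
  rcases List.eq_nil_or_concat es with rfl | ⟨es, α', rfl⟩
  · exact absurd hβ (hlast m α (by simpa using hmα.symm))
  · rw [List.concat_eq_append] at hmα hes
    rw [← List.append_assoc] at hmα
    obtain ⟨rfl, hαα'⟩ := List.append_inj' hmα rfl
    obtain rfl : α = α' := List.singleton_inj.1 hαα'
    exact (mem_range_prefixHom_onV hc).2 ⟨es, rfl, hsα ▸ hes.of_append_singleton.1⟩

theorem conn_iff_mem_range_prefixHom (hlast : ∀ m α, c = m ++ [α] → α ∉ T.edges)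
    {q₀ : (Fib (pathPi S s₀) T.incl).V} (hq₀ : q₀ ∈ Set.range (prefixHom T hc).onV)
    (q : (Fib (pathPi S s₀) T.incl).V) :
    Conn _ q₀ q ↔ q ∈ Set.range (prefixHom T hc).onV := by
  constructor
  · intro h
    induction h with
    | refl => exact hq₀
    | tail _ hadj ih =>
        obtain ⟨e, ⟨rfl, rfl⟩ | ⟨rfl, rfl⟩⟩ := hadj
        · obtain ⟨y, rfl⟩ := mem_range_prefixHom_onE hc ih
          exact ⟨_, ((prefixHom T hc).ht y).symm⟩
        · exact source_mem_range_prefixHom hc hlast ih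
  · rintro ⟨p, rfl⟩
    obtain ⟨p₀, rfl⟩ := hq₀
    have hroot := fun p => (prefixHom T hc).conn_map (PathQ.conn_root p)
    exact (hroot p₀).symm.trans (hroot p)

end FiberProduct

end BQuiv

theorem component_pathQuiver_prod_idempotent_general
    (Q : BQuiv) (S T : Sub Q) (s₀ : Q.V) :
    ∀ v₀ : (Fib (pathPi S s₀) T.incl).V,
      ∃ j ∈ (S.inter T).verts,
        Nonempty (OverIso (componentHom (fibHom (pathPi S s₀) T.incl) v₀)
          (pathPi (succClosure (S.inter T) j) j)) := by
  intro v₀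
  obtain ⟨c, fs, hl, hfsT, hlast⟩ :=
    List.exists_maximal_suffix_forall (· ∈ T.edges) v₀.1.1.1.2
  have hpath : S.IsPathIn s₀ v₀.1.1.1.1 (c ++ fs) := hl ▸ v₀.1.1.2
  have hvT : v₀.1.1.1.1 ∈ T.verts := (show v₀.1.1.1.1 = v₀.1.2.1 from v₀.2) ▸ v₀.1.2.2
  obtain ⟨j, hc, hfs⟩ := hpath.2.1.exists_of_append
  have hcS : S.IsPathIn s₀ j c := ⟨hpath.1, hc, fun e he => hpath.2.2 e (by simp [he])⟩
  have hfsST : (S.inter T).IsPathIn j v₀.1.1.1.1 fs :=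
    Sub.isPathIn_of_end_mem ⟨hpath.end_mem, hvT⟩ hfs
      fun e he => ⟨hpath.2.2 e (by simp [he]), hfsT e he⟩
  have hv₀ := (mem_range_prefixHom_onV hcS).2 ⟨fs, hl, hfsST⟩
  exact ⟨j, hfsST.1, nonempty_overIso_component _ _ (prefixHom T hcS)
    (prefixHom_onV_injective hcS) (prefixHom_onE_injective hcS)
    (conn_iff_mem_range_prefixHom hcS hlast hv₀) (fun _ => mem_range_prefixHom_onE hcS)⟩

/-- Every connected component of the fiber product `P_{S,s₀} ×_Q E_T`
is isomorphic over `Q` to a path quiver `P_{W,j}`, where `j` is a vertex of `S ∩ T` and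
`W` is the successor closure of `j` in `S ∩ T`. -/
theorem component_pathQuiver_prod_idempotent
    (Q : BQuiv) [Fintype Q.V] [Fintype Q.E] (hQ : Q.IsAcyclic)
    (S T : Sub Q) (s₀ : Q.V) (hS : S.IsUniqueSource s₀) :
    ∀ v₀ : (Fib (pathPi S s₀) T.incl).V,
      ∃ j ∈ (S.inter T).verts,
        Nonempty (OverIso (componentHom (fibHom (pathPi S s₀) T.incl) v₀)
          (pathPi (succClosure (S.inter T) j) j)) :=
  component_pathQuiver_prod_idempotent_general Q S T s₀
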